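/- arXiv:2312.08484 — 7 statements merged into one kernel-verified Lean document; each statement's English description precedes it below -/
import Mathlib

section
/- Let 0 < α < 1, 0 < γ < 1, let r_CC, r_DD, q_CCC, q_DDD be reals with q_DDD < q_CCC ≤ r_CC/(1−γ), and let (u_t), (v_t) be real sequences satisfying u_{t+1} = (1−α)·u_t + α·(r_DD + γ·v_t) and v_{t+1} = (1−α)·v_t + α·(r_CC + γ·u_{t+1}). If v₀ > q_DDD and u_{t+1} > q_CCC for all t < T, then v_{t+1} > q_DDD for all t < T. -/
/-! The update of `v` is a convex combination of the old value `v t` and the target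
`rCC + γ u (t+1)`. Since `qCCC ≤ rCC / (1 - γ)` makes `qCCC` a sub-fixed point of
`x ↦ rCC + γ x`, the target is at least `qCCC > qDDD` whenever `u (t+1) > qCCC`;
so the convex combination stays above `qDDD`, and induction on `t` finishes. -/

theorem le_add_mul_of_le_div_one_sub {r γ q x : ℝ} (hγ0 : 0 ≤ γ) (hγ1 : γ < 1)
    (hq : q ≤ r / (1 - γ)) (hx : q ≤ x) : q ≤ r + γ * x := by
  have hr : (1 - γ) * q ≤ r := (le_div_iff₀' (sub_pos.mpr hγ1)).mp hq
  nlinarith [mul_le_mul_of_nonneg_left hx hγ0]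

theorem lt_one_sub_mul_add_mul {q a b α : ℝ} (ha : q < a) (hb : q < b)
    (hα0 : 0 ≤ α) (hα1 : α ≤ 1) : q < (1 - α) * a + α * b := by
  simpa using convex_Ioi q ha hb (sub_nonneg.mpr hα1) hα0 (sub_add_cancel 1 α)

theorem Nat.forall_le_of_forall_lt_imp_succ {P : ℕ → Prop} {T : ℕ} (h0 : P 0)
    (hstep : ∀ t < T, P t → P (t + 1)) : ∀ t ≤ T, P t := by
  intro t
  induction t with
  | zero => exact fun _ => h0
  | succ t ih => exact fun ht => hstep t ht (ih (Nat.le_of_succ_le ht))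

theorem stay_in_lose_shift_general
    (α γ rCC qCCC qDDD : ℝ)
    (hα0 : 0 < α) (hα1 : α < 1) (hγ0 : 0 < γ) (hγ1 : γ < 1)
    (hq1 : qDDD < qCCC) (hq2 : qCCC ≤ rCC / (1 - γ))
    (u v : ℕ → ℝ)
    (hv : ∀ t, v (t + 1) = (1 - α) * v t + α * (rCC + γ * u (t + 1)))
    (T : ℕ) (hv0 : v 0 > qDDD) (huT : ∀ t < T, u (t + 1) > qCCC) :
    ∀ t < T, v (t + 1) > qDDD := by
  have htarget : ∀ t < T, qDDD < rCC + γ * u (t + 1) := fun t ht =>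
    hq1.trans_le (le_add_mul_of_le_div_one_sub hγ0.le hγ1 hq2 (huT t ht).le)
  have hstep : ∀ t < T, qDDD < v t → qDDD < v (t + 1) := fun t ht hvt => by
    rw [hv t]
    exact lt_one_sub_mul_add_mul hvt (htarget t ht) hα0.le hα1.le
  exact fun t ht => Nat.forall_le_of_forall_lt_imp_succ (P := fun t => qDDD < v t) hv0 hstep
    (t + 1) ht

/-- the 'stay in lose-shift' lemma: along the coupled Phase-2
recursion, v stays above q_DDD as long as u stays above q_CCC. -/
theorem stay_in_lose_shift
    (α γ rCC rDD qCCC qDDD : ℝ)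
    (hα0 : 0 < α) (hα1 : α < 1) (hγ0 : 0 < γ) (hγ1 : γ < 1)
    (hq1 : qDDD < qCCC) (hq2 : qCCC ≤ rCC / (1 - γ))
    (u v : ℕ → ℝ)
    (hu : ∀ t, u (t + 1) = (1 - α) * u t + α * (rDD + γ * v t))
    (hv : ∀ t, v (t + 1) = (1 - α) * v t + α * (rCC + γ * u (t + 1)))
    (T : ℕ) (hv0 : v 0 > qDDD) (huT : ∀ t < T, u (t + 1) > qCCC) :
    ∀ t < T, v (t + 1) > qDDD :=
  stay_in_lose_shift_general α γ rCC qCCC qDDD hα0 hα1 hγ0 hγ1 hq1 hq2 u v hv T hv0 huT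
end

section
/- Let 0 < α < 1 and 0 < γ < 1, and consider the real 2×2 matrix M = [[1−α, −αγ], [−αγ(1−α), 1−α+(αγ)²]]. Then the numbers λ₊ = 1−α+αγ·(αγ/2 + √(1−α+(αγ)²/4)) and λ₋ = 1−α+αγ·(αγ/2 − √(1−α+(αγ)²/4)) are the eigenvalues of M (i.e., det(M − λ₊·I) = 0 and det(M − λ₋·I) = 0, with det M = (1−α)² and trace M = 2(1−α)+(αγ)²), and both satisfy 0 < λ₋ ≤ λ₊ < 1. -/
/-!
Writing `c = αγ` and `s = √(1 - α + c²/4)`, the two numbers are `λ± = t/2 ± c s` with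
`t = 2(1 - α) + c² = tr M`, and `s² = 1 - α + c²/4` gives `λ₊ λ₋ = (1 - α)² = det M`.
By Vieta they are therefore the roots of the characteristic polynomial `x² - t x + det M`.
Both roots are positive because their sum and product are, and both lie below `1` because
the numbers `1 - λ±` have positive sum `2α - c²` and positive product `1 - t + det M = α²(1 - γ²)`.
-/

namespace Matrix

variable {R : Type*} [CommRing R]

theorem det_fin_two_sub_smul_one (A : Matrix (Fin 2) (Fin 2) R) (x : R) :
    (A - x • (1 : Matrix (Fin 2) (Fin 2) R)).det = x ^ 2 - A.trace * x + A.det := by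
  simp only [det_fin_two, trace_fin_two, sub_apply, smul_apply, one_apply_eq,
    one_apply_ne (by decide : (0 : Fin 2) ≠ 1), one_apply_ne (by decide : (1 : Fin 2) ≠ 0),
    smul_eq_mul, mul_one, mul_zero]
  ring

theorem det_fin_two_sub_smul_one_eq_zero_of_vieta {A : Matrix (Fin 2) (Fin 2) R} {x y : R}
    (hsum : x + y = A.trace) (hprod : x * y = A.det) :
    (A - x • (1 : Matrix (Fin 2) (Fin 2) R)).det = 0 := by
  rw [det_fin_two_sub_smul_one, ← hsum, ← hprod]
  ring

end Matrix

theorem pos_of_add_pos_of_mul_pos {R : Type*} [Ring R] [LinearOrder R] [IsStrictOrderedRing R]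
    {x y : R} (hsum : 0 < x + y) (hprod : 0 < x * y) : 0 < x :=
  ((pos_and_pos_or_neg_and_neg_of_mul_pos hprod).resolve_right
    fun h => (add_neg h.1 h.2).not_gt hsum).1

/-- eigenvalues of the Phase-2 (lose-shift) dynamics matrix lie
strictly inside (0, 1). -/
theorem lose_shift_matrix_eigenvalues
    (α γ : ℝ) (hα0 : 0 < α) (hα1 : α < 1) (hγ0 : 0 < γ) (hγ1 : γ < 1) :
    let M : Matrix (Fin 2) (Fin 2) ℝ :=
      !![1 - α, -(α * γ); -(α * γ) * (1 - α), 1 - α + (α * γ) ^ 2]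
    let lp : ℝ := 1 - α + α * γ * (α * γ / 2 + Real.sqrt (1 - α + (α * γ) ^ 2 / 4))
    let lm : ℝ := 1 - α + α * γ * (α * γ / 2 - Real.sqrt (1 - α + (α * γ) ^ 2 / 4))
    (M - lp • (1 : Matrix (Fin 2) (Fin 2) ℝ)).det = 0 ∧
    (M - lm • (1 : Matrix (Fin 2) (Fin 2) ℝ)).det = 0 ∧
    M.det = (1 - α) ^ 2 ∧
    M.trace = 2 * (1 - α) + (α * γ) ^ 2 ∧
    0 < lm ∧ lm ≤ lp ∧ lp < 1 := by
  intro M lp lm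
  have hs : Real.sqrt (1 - α + (α * γ) ^ 2 / 4) ^ 2 = 1 - α + (α * γ) ^ 2 / 4 :=
    Real.sq_sqrt (by positivity)
  have hdet : M.det = (1 - α) ^ 2 := by
    rw [Matrix.det_fin_two_of]; ring
  have htrace : M.trace = 2 * (1 - α) + (α * γ) ^ 2 := by
    rw [Matrix.trace_fin_two_of]; ring
  have hsum : lp + lm = M.trace := by
    rw [htrace]; ring
  have hprod : lp * lm = M.det := by
    rw [hdet]; linear_combination (-(α * γ) ^ 2) * hs
  have hspread : lm ≤ lp := by
    have := Real.sqrt_nonneg (1 - α + (α * γ) ^ 2 / 4)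
    simp only [lm, lp]
    gcongr
    linarith
  refine ⟨Matrix.det_fin_two_sub_smul_one_eq_zero_of_vieta hsum hprod,
    Matrix.det_fin_two_sub_smul_one_eq_zero_of_vieta (x := lm) (by rwa [add_comm])
      (by rwa [mul_comm]), hdet, htrace, ?_, hspread, ?_⟩
  · refine pos_of_add_pos_of_mul_pos (y := lp) ?_ ?_
    · rw [add_comm, hsum, htrace]
      positivity
    · rw [mul_comm, hprod, hdet]
      exact pow_pos (sub_pos.mpr hα1) 2
  · refine sub_pos.mp (pos_of_add_pos_of_mul_pos (y := 1 - lm) ?_ ?_)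
    · have hvalue : 1 - lp + (1 - lm) = α * (2 - α * γ ^ 2) := by
        linear_combination -hsum - htrace
      rw [hvalue]
      exact mul_pos hα0 (by nlinarith)
    · have hvalue : (1 - lp) * (1 - lm) = α ^ 2 * (1 - γ ^ 2) := by
        linear_combination -hsum + hprod - htrace + hdet
      rw [hvalue]
      exact mul_pos (by positivity) (by nlinarith)
end

section
/- Let 0 < α < 1, 0 < γ < 1, and r_CC, r_DD ∈ ℝ, and let (u_t), (v_t) be real sequences satisfying u_{t+1} = (1−α)·u_t + α·(r_DD + γ·v_t) and v_{t+1} = (1−α)·v_t + α·(r_CC + γ·u_{t+1}). Then u_t converges to u* = (r_DD + γ·r_CC)/(1−γ²) and v_t converges to v* = (r_CC + γ·r_DD)/(1−γ²) as t → ∞. -/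
/-!
Measured from the fixed point, one sweep of the recursion is a Gauss–Seidel relaxation
step `x' = (1 - α) x + α γ y`, `y' = (1 - α) y + α γ x'`. Each of its two updates is a
combination with weights `1 - α` and `α γ` summing to `1 - α (1 - γ) < 1`, so the sweep
contracts the sup norm of the error `(u t - u*, v t - v*)` by that factor, and the ratio
test makes the error summable, hence null.
-/

open Filter Topology

lemma add_mul_div_one_sub_sq_eq {γ : ℝ} (hγ : γ ^ 2 ≠ 1) (a b : ℝ) :
    (a + γ * b) / (1 - γ ^ 2) = a + γ * ((b + γ * a) / (1 - γ ^ 2)) := by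
  have : 1 - γ ^ 2 ≠ 0 := sub_ne_zero.2 hγ.symm
  field_simp
  ring

section Relaxation

variable {α γ : ℝ} (hα0 : 0 ≤ α) (hα1 : α ≤ 1) (hγ0 : 0 ≤ γ)
include hα0 hα1 hγ0

lemma abs_relax_le (x y : ℝ) :
    |(1 - α) * x + α * γ * y| ≤ (1 - α * (1 - γ)) * max |x| |y| := by
  have h1α : 0 ≤ 1 - α := sub_nonneg.2 hα1
  have hαγ : 0 ≤ α * γ := mul_nonneg hα0 hγ0
  calc |(1 - α) * x + α * γ * y| ≤ (1 - α) * |x| + α * γ * |y| := by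
        refine (abs_add_le _ _).trans_eq ?_
        rw [abs_mul, abs_mul, abs_of_nonneg h1α, abs_of_nonneg hαγ]
    _ ≤ (1 - α) * max |x| |y| + α * γ * max |x| |y| := by
        gcongr
        · exact le_max_left _ _
        · exact le_max_right _ _
    _ = (1 - α * (1 - γ)) * max |x| |y| := by ring

lemma norm_relax_sweep_le (hγ1 : γ ≤ 1) {x y x' y' : ℝ}
    (hx' : x' = (1 - α) * x + α * γ * y) (hy' : y' = (1 - α) * y + α * γ * x') :
    ‖(x', y')‖ ≤ (1 - α * (1 - γ)) * ‖(x, y)‖ := by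
  have hc0 : 0 ≤ 1 - α * (1 - γ) := by nlinarith
  have hc : 1 - α * (1 - γ) ≤ 1 := by nlinarith
  have hnorm : ‖(x, y)‖ = max |x| |y| := rfl
  have hx'_le : |x'| ≤ (1 - α * (1 - γ)) * ‖(x, y)‖ :=
    hx' ▸ abs_relax_le hα0 hα1 hγ0 x y
  have hx'_le_norm : |x'| ≤ ‖(x, y)‖ :=
    hx'_le.trans (mul_le_of_le_one_left (norm_nonneg _) hc)
  refine max_le hx'_le ?_
  calc ‖y'‖ = |(1 - α) * y + α * γ * x'| := by rw [hy', Real.norm_eq_abs]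
    _ ≤ (1 - α * (1 - γ)) * max |y| |x'| := abs_relax_le hα0 hα1 hγ0 y x'
    _ ≤ (1 - α * (1 - γ)) * ‖(x, y)‖ := by
        gcongr
        exact max_le (hnorm ▸ le_max_right _ _) hx'_le_norm

end Relaxation

/-- the coupled Phase-2 (lose-shift) recursion converges to its
fixed point. -/
theorem lose_shift_recursion_converges
    (α γ rCC rDD : ℝ)
    (hα0 : 0 < α) (hα1 : α < 1) (hγ0 : 0 < γ) (hγ1 : γ < 1)
    (u v : ℕ → ℝ)
    (hu : ∀ t, u (t + 1) = (1 - α) * u t + α * (rDD + γ * v t))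
    (hv : ∀ t, v (t + 1) = (1 - α) * v t + α * (rCC + γ * u (t + 1))) :
    Filter.Tendsto u Filter.atTop (nhds ((rDD + γ * rCC) / (1 - γ ^ 2))) ∧
    Filter.Tendsto v Filter.atTop (nhds ((rCC + γ * rDD) / (1 - γ ^ 2))) := by
  set U := (rDD + γ * rCC) / (1 - γ ^ 2)
  set V := (rCC + γ * rDD) / (1 - γ ^ 2)
  have hγ2 : γ ^ 2 ≠ 1 := by nlinarith
  have hU : U = rDD + γ * V := add_mul_div_one_sub_sq_eq hγ2 rDD rCC
  have hV : V = rCC + γ * U := add_mul_div_one_sub_sq_eq hγ2 rCC rDD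
  have hsweep (t : ℕ) :
      ‖(u (t + 1) - U, v (t + 1) - V)‖ ≤ (1 - α * (1 - γ)) * ‖(u t - U, v t - V)‖ :=
    norm_relax_sweep_le hα0.le hα1.le hγ0.le hγ1.le
      (by rw [hu t, hU]; ring) (by rw [hv t, hV]; ring)
  have hc : 1 - α * (1 - γ) < 1 := by nlinarith
  have herr : Tendsto (fun t => (u t - U, v t - V)) atTop (𝓝 0) :=
    (summable_of_ratio_norm_eventually_le hc (.of_forall hsweep)).tendsto_atTop_zero
  exact ⟨tendsto_sub_nhds_zero_iff.1 (by simpa using herr.fst_nhds),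
    tendsto_sub_nhds_zero_iff.1 (by simpa using herr.snd_nhds)⟩
end

section
/- Let ε be a real number with 0 ≤ ε ≤ 1/2 and let k ≤ T be natural numbers. Then ∑_{i=0}^{k} (T choose i) · (1−ε)^{2(T−i)} · (2ε−ε²)^{i} ≥ 1 − 2^T · (2ε)^{k+1}. -/
/-!
The summands are the terms of the binomial expansion of `(a + b) ^ T = 1` with
`a = 2ε - ε²` and `b = (1 - ε) ^ 2`, so the sum is `1` minus the upper tail `i > k`.
Since `a ≤ 2ε ≤ 1` and `b ≤ 1`, each tail term is at most `(T choose i) (2ε) ^ (k + 1)`,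
and the binomial coefficients sum to `2 ^ T`.
-/

open Finset

theorem sum_filter_lt_pow_mul_pow_mul_choose_le {a b p : ℝ} (ha : 0 ≤ a) (hb : 0 ≤ b)
    (hab : a + b = 1) (hap : a ≤ p) (hp : p ≤ 1) (k T : ℕ) :
    ∑ i ∈ (range (T + 1)).filter (k < ·), a ^ i * b ^ (T - i) * T.choose i
      ≤ 2 ^ T * p ^ (k + 1) := by
  have hp0 : 0 ≤ p := ha.trans hap
  have hb1 : b ≤ 1 := by linarith
  calc ∑ i ∈ (range (T + 1)).filter (k < ·), a ^ i * b ^ (T - i) * T.choose i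
      ≤ ∑ i ∈ (range (T + 1)).filter (k < ·), p ^ (k + 1) * T.choose i := by
        refine sum_le_sum fun i hi => ?_
        have hki : k + 1 ≤ i := (mem_filter.mp hi).2
        calc a ^ i * b ^ (T - i) * T.choose i ≤ p ^ i * 1 * T.choose i := by
              gcongr
              exact pow_le_one₀ hb hb1
          _ ≤ p ^ (k + 1) * T.choose i := by
              rw [mul_one]
              exact mul_le_mul_of_nonneg_right (pow_le_pow_of_le_one hp0 hp hki) (by positivity)
    _ ≤ ∑ i ∈ range (T + 1), p ^ (k + 1) * T.choose i :=
        sum_le_sum_of_subset_of_nonneg (filter_subset _ _) fun _ _ _ => by positivity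
    _ = 2 ^ T * p ^ (k + 1) := by
        rw [← mul_sum, ← Nat.cast_sum, Nat.sum_range_choose]
        push_cast
        ring

theorem one_sub_le_sum_range_pow_mul_pow_mul_choose {a b p : ℝ} (ha : 0 ≤ a) (hb : 0 ≤ b)
    (hab : a + b = 1) (hap : a ≤ p) (hp : p ≤ 1) (k T : ℕ) :
    1 - 2 ^ T * p ^ (k + 1) ≤ ∑ i ∈ range (k + 1), a ^ i * b ^ (T - i) * T.choose i := by
  have hexpansion : ∑ i ∈ range (T + 1), a ^ i * b ^ (T - i) * T.choose i = 1 := by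
    rw [← add_pow, hab, one_pow]
  rw [← sum_filter_add_sum_filter_not (range (T + 1)) (k < ·)] at hexpansion
  have hhead : ∑ i ∈ (range (T + 1)).filter (¬ k < ·), a ^ i * b ^ (T - i) * T.choose i
      ≤ ∑ i ∈ range (k + 1), a ^ i * b ^ (T - i) * T.choose i := by
    refine sum_le_sum_of_subset_of_nonneg (fun i hi => ?_) fun _ _ _ => by positivity
    simp only [mem_filter, mem_range] at hi ⊢
    omega
  linarith [sum_filter_lt_pow_mul_pow_mul_choose_le ha hb hab hap hp k T]

theorem nongreedy_event_probability_general
    (ε : ℝ) (hε0 : 0 ≤ ε) (hε1 : ε ≤ 1 / 2) (k T : ℕ) :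
    ∑ i ∈ Finset.range (k + 1),
        (T.choose i : ℝ) * (1 - ε) ^ (2 * (T - i)) * (2 * ε - ε ^ 2) ^ i
      ≥ 1 - 2 ^ T * (2 * ε) ^ (k + 1) := by
  have hbound := one_sub_le_sum_range_pow_mul_pow_mul_choose (a := 2 * ε - ε ^ 2)
    (b := (1 - ε) ^ 2) (p := 2 * ε) (by nlinarith) (sq_nonneg _) (by ring) (by nlinarith)
    (by linarith) k T
  refine hbound.trans_eq (sum_congr rfl fun i _ => ?_)
  rw [pow_mul]
  ring

/-- Lemma 3.3(a): lower bound on the probability that non-greedy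
actions occur in at most k of T steps. -/
theorem nongreedy_event_probability
    (ε : ℝ) (hε0 : 0 ≤ ε) (hε1 : ε ≤ 1 / 2) (k T : ℕ) (hkT : k ≤ T) :
    ∑ i ∈ Finset.range (k + 1),
        (T.choose i : ℝ) * (1 - ε) ^ (2 * (T - i)) * (2 * ε - ε ^ 2) ^ i
      ≥ 1 - 2 ^ T * (2 * ε) ^ (k + 1) :=
  nongreedy_event_probability_general ε hε0 hε1 k T
end

section
/- Let 0 < α < 1, 0 < γ < 1, set λ = 1 − α(1−γ) (so 0 < λ < 1), let c ≥ 0 and x* ∈ ℝ, let T and m be naturals with m ≤ T, and let (x_t) be a real sequence with x₀ ≥ x*. Suppose there is a set G ⊆ {0,…,T−1} with |{0,…,T−1} \ G| ≤ m such that x_{t+1} − x* = λ·(x_t − x*) for every t ∈ G, and |x_{t+1} − x_t| ≤ c for every t ∈ {0,…,T−1} \ G. Then x_T − x* ≤ λ^{T−m}·(x₀ − x*) + m·c. -/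
/-!
Contraction steps multiply the excess `x t - xs` by `λ ∈ [0, 1]` and perturbed steps add at most
`c`. Inductively, after `n` steps the excess is at most `λ ^ g * (x 0 - xs) + b * c`, where `g` and
`b` count the contracting and the perturbed steps so far: multiplying the bound by `λ` keeps the
accumulated `b * c` below itself. At time `T` at least `T - m` steps contracted, and `x 0 - xs ≥ 0`.
-/

open Finset

theorem perturbed_contraction_le {R : Type*} [CommRing R] [PartialOrder R] [IsOrderedRing R]
    {r c : R} (hr0 : 0 ≤ r) (hr1 : r ≤ 1) (hc : 0 ≤ c) (e : ℕ → R) (G : Finset ℕ) (n : ℕ)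
    (hcontract : ∀ t < n, t ∈ G → e (t + 1) = r * e t)
    (hstep : ∀ t < n, t ∉ G → e (t + 1) ≤ e t + c) :
    e n ≤ r ^ #(range n ∩ G) * e 0 + #(range n \ G) * c := by
  induction n with
  | zero => simp
  | succ k ih =>
    have ih := ih (fun t ht => hcontract t (by omega)) (fun t ht => hstep t (by omega))
    have hk : k ∉ range k := by simp
    rw [range_add_one]
    by_cases hkG : k ∈ G
    · rw [insert_inter_of_mem hkG, insert_sdiff_of_mem _ hkG,
        card_insert_of_notMem (fun h => hk (mem_of_mem_inter_left h)), pow_succ',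
        hcontract k (by omega) hkG]
      have hbc : 0 ≤ (#(range k \ G) : R) * c := mul_nonneg (Nat.cast_nonneg _) hc
      calc r * e k ≤ r * (r ^ #(range k ∩ G) * e 0 + #(range k \ G) * c) :=
            mul_le_mul_of_nonneg_left ih hr0
        _ ≤ r * r ^ #(range k ∩ G) * e 0 + #(range k \ G) * c := by
            rw [mul_add, ← mul_assoc]
            exact add_le_add_right (mul_le_of_le_one_left hbc hr1) _
    · rw [insert_inter_of_notMem hkG, insert_sdiff_of_notMem _ hkG,
        card_insert_of_notMem (fun h => hk (mem_sdiff.1 h).1), Nat.cast_succ, add_one_mul,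
        ← add_assoc]
      exact (hstep k (by omega) hkG).trans (add_le_add_left ih c)

theorem contraction_with_perturbations_general
    (α γ c xs : ℝ) (hα0 : 0 < α) (hα1 : α < 1) (hγ0 : 0 < γ) (hγ1 : γ < 1)
    (hc : 0 ≤ c) (T m : ℕ)
    (x : ℕ → ℝ) (hx0 : x 0 ≥ xs)
    (G : Finset ℕ)
    (hcard : (Finset.range T \ G).card ≤ m)
    (hcontract : ∀ t ∈ G, x (t + 1) - xs = (1 - α * (1 - γ)) * (x t - xs))
    (hbd : ∀ t ∈ Finset.range T \ G, |x (t + 1) - x t| ≤ c) :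
    x T - xs ≤ (1 - α * (1 - γ)) ^ (T - m) * (x 0 - xs) + m * c := by
  have hγ : 0 ≤ 1 - γ := sub_nonneg.2 hγ1.le
  have hr0 : 0 ≤ 1 - α * (1 - γ) := sub_nonneg.2 (mul_le_one₀ hα1.le hγ (by linarith))
  have hr1 : 1 - α * (1 - γ) ≤ 1 := sub_le_self _ (mul_nonneg hα0.le hγ)
  have hbound := perturbed_contraction_le hr0 hr1 hc (fun t => x t - xs) G T
    (fun t _ htG => hcontract t htG)
    (fun t ht htG => by
      have := le_of_abs_le (hbd t (mem_sdiff.2 ⟨mem_range.2 ht, htG⟩))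
      linarith)
  have hgood : T - m ≤ #(range T ∩ G) := by
    have := card_inter_add_card_sdiff (range T) G
    rw [card_range] at this
    omega
  calc x T - xs ≤ _ := hbound
    _ ≤ (1 - α * (1 - γ)) ^ (T - m) * (x 0 - xs) + m * c :=
      add_le_add
        (mul_le_mul_of_nonneg_right (pow_le_pow_of_le_one hr0 hr1 hgood) (sub_nonneg.2 hx0))
        (mul_le_mul_of_nonneg_right (Nat.cast_le.2 hcard) hc)

/-- Lemma 3.3(d): a sequence contracting with rate λ = 1 − α(1−γ)
except on at most m perturbed steps (each of size ≤ c) satisfies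
x_T − x* ≤ λ^{T−m}(x₀ − x*) + m c. -/
theorem contraction_with_perturbations
    (α γ c xs : ℝ) (hα0 : 0 < α) (hα1 : α < 1) (hγ0 : 0 < γ) (hγ1 : γ < 1)
    (hc : 0 ≤ c) (T m : ℕ) (hm : m ≤ T)
    (x : ℕ → ℝ) (hx0 : x 0 ≥ xs)
    (G : Finset ℕ) (hG : G ⊆ Finset.range T)
    (hcard : (Finset.range T \ G).card ≤ m)
    (hcontract : ∀ t ∈ G, x (t + 1) - xs = (1 - α * (1 - γ)) * (x t - xs))
    (hbd : ∀ t ∈ Finset.range T \ G, |x (t + 1) - x t| ≤ c) :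
    x T - xs ≤ (1 - α * (1 - γ)) ^ (T - m) * (x 0 - xs) + m * c :=
  contraction_with_perturbations_general α γ c xs hα0 hα1 hγ0 hγ1 hc T m x hx0 G hcard hcontract hbd
end

section
/- Let 0 < α, 0 < γ < 1 and set λ = 1 − α(1−γ) ∈ (0,1). Let Δ_r > 0, k and T naturals with 2k ≤ T, and reals x*, x₀, y₀ with x₀ > x* and y₀ − x* − 4k·Δ_r·α/(1−γ) > 0. Let x_T, y_T be reals with x_T − x* ≤ λ^{T−2k}·(x₀ − x*) + 2k·Δ_r·α/(1−γ) and y_T ≥ y₀ − 2k·Δ_r·α/(1−γ). If T > 2k + (log(y₀ − x* − 4k·Δ_r·α/(1−γ)) − log(x₀ − x*)) / log(λ), then x_T < y_T. -/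
/-!
The defect value `x_t` contracts geometrically toward `x*`, so after `T - 2k` unperturbed steps
its distance `λ^(T-2k) (x₀ - x*)` drops below the margin `y₀ - x* - 4kΔ_rα/(1-γ)` by which the
cooperate value still exceeds `x*`; taking logarithms (with `log λ < 0`) this is exactly the
horizon bound, and the perturbation terms `±2kΔ_rα/(1-γ)` of `x_T` and `y_T` fit in the margin.
-/

theorem pow_mul_lt_of_log_div_log_lt {lam A B : ℝ} (hlam0 : 0 < lam) (hlam1 : lam < 1)
    (hA : 0 < A) (hB : 0 < B) {n : ℕ} (hn : (Real.log B - Real.log A) / Real.log lam < n) :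
    lam ^ n * A < B := by
  have hloglam : Real.log lam < 0 := Real.log_neg hlam0 hlam1
  have hlog : n * Real.log lam + Real.log A < Real.log B := by
    have := (div_lt_iff_of_neg hloglam).mp hn
    linarith
  rwa [← Real.log_pow, ← Real.log_mul (by positivity) hA.ne',
    Real.log_lt_log_iff (by positivity) hB] at hlog

theorem crossing_to_lose_shift_general
    (α γ Δr xs x0 y0 xT yT : ℝ)
    (hlam0 : 0 < 1 - α * (1 - γ)) (hlam1 : 1 - α * (1 - γ) < 1)
    (k T : ℕ) (hkT : 2 * k ≤ T)
    (hx0 : x0 > xs)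
    (hy0 : y0 - xs - 4 * k * Δr * α / (1 - γ) > 0)
    (hxT : xT - xs ≤ (1 - α * (1 - γ)) ^ (T - 2 * k) * (x0 - xs)
        + 2 * k * Δr * α / (1 - γ))
    (hyT : yT ≥ y0 - 2 * k * Δr * α / (1 - γ))
    (hT : (T : ℝ) > 2 * k +
        (Real.log (y0 - xs - 4 * k * Δr * α / (1 - γ)) - Real.log (x0 - xs)) /
          Real.log (1 - α * (1 - γ))) :
    xT < yT := by
  have hcontract : (1 - α * (1 - γ)) ^ (T - 2 * k) * (x0 - xs)
      < y0 - xs - 4 * k * Δr * α / (1 - γ) :=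
    pow_mul_lt_of_log_div_log_lt hlam0 hlam1 (sub_pos.mpr hx0) hy0
      (by push_cast [Nat.cast_sub hkT]; linarith)
  have hmargin : 4 * k * Δr * α / (1 - γ) = 2 * (2 * k * Δr * α / (1 - γ)) := by ring
  linarith

/-- Lemma 3.3(f): the crossing from always-defect to lose-shift:
with the stated horizon lower bound, x_T < y_T. -/
theorem crossing_to_lose_shift
    (α γ Δr xs x0 y0 xT yT : ℝ)
    (hα : 0 < α) (hγ0 : 0 < γ) (hγ1 : γ < 1)
    (hlam0 : 0 < 1 - α * (1 - γ)) (hlam1 : 1 - α * (1 - γ) < 1)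
    (hΔr : 0 < Δr) (k T : ℕ) (hkT : 2 * k ≤ T)
    (hx0 : x0 > xs)
    (hy0 : y0 - xs - 4 * k * Δr * α / (1 - γ) > 0)
    (hxT : xT - xs ≤ (1 - α * (1 - γ)) ^ (T - 2 * k) * (x0 - xs)
        + 2 * k * Δr * α / (1 - γ))
    (hyT : yT ≥ y0 - 2 * k * Δr * α / (1 - γ))
    (hT : (T : ℝ) > 2 * k +
        (Real.log (y0 - xs - 4 * k * Δr * α / (1 - γ)) - Real.log (x0 - xs)) /
          Real.log (1 - α * (1 - γ))) :
    xT < yT :=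
  crossing_to_lose_shift_general α γ Δr xs x0 y0 xT yT hlam0 hlam1 k T hkT hx0 hy0 hxT hyT hT
end

section
/- Let r_CC, r_CD, r_DC, r_DD be reals with r_DC > r_CC > r_DD > r_CD, and let γ ∈ (0,1) satisfy γ ≥ (r_DC − r_CC)/(r_CC − r_DD). Then the two one-shot-deviation inequalities for the Pavlov policy hold: (i) r_CD + γ·r_DD + γ²·r_CC ≤ r_DD + γ·r_CC + γ²·r_CC, and (ii) r_DC + γ·r_DD + γ²·r_CC ≤ r_CC + γ·r_CC + γ²·r_CC; moreover (ii) holds if and only if γ ≥ (r_DC − r_CC)/(r_CC − r_DD). -/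
theorem add_mul_add_sq_mul_le_iff (γ a b c a' b' : ℝ) :
    a + γ * b + γ ^ 2 * c ≤ a' + γ * b' + γ ^ 2 * c ↔ a - a' ≤ γ * (b' - b) := by
  constructor <;> intro h <;> linarith

theorem pavlov_one_shot_deviation_general
    (rCC rCD rDC rDD γ : ℝ)
    (h2 : rCC > rDD) (h3 : rDD > rCD)
    (hγ0 : 0 < γ) :
    (γ ≥ (rDC - rCC) / (rCC - rDD) →
      rCD + γ * rDD + γ ^ 2 * rCC ≤ rDD + γ * rCC + γ ^ 2 * rCC ∧
      rDC + γ * rDD + γ ^ 2 * rCC ≤ rCC + γ * rCC + γ ^ 2 * rCC) ∧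
    ((rDC + γ * rDD + γ ^ 2 * rCC ≤ rCC + γ * rCC + γ ^ 2 * rCC) ↔
      γ ≥ (rDC - rCC) / (rCC - rDD)) := by
  have hgap : 0 < rCC - rDD := sub_pos.2 h2
  have hCC : rDC + γ * rDD + γ ^ 2 * rCC ≤ rCC + γ * rCC + γ ^ 2 * rCC ↔
      γ ≥ (rDC - rCC) / (rCC - rDD) := by
    rw [ge_iff_le, div_le_iff₀ hgap, add_mul_add_sq_mul_le_iff]
  refine ⟨fun hγ => ⟨?_, hCC.2 hγ⟩, hCC⟩
  rw [add_mul_add_sq_mul_le_iff]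
  exact (sub_neg.2 h3).le.trans (mul_nonneg hγ0.le hgap.le)

/-- the one-shot-deviation inequalities showing Pavlov is a subgame
perfect equilibrium when γ ≥ (r_DC − r_CC)/(r_CC − r_DD). -/
theorem pavlov_one_shot_deviation
    (rCC rCD rDC rDD γ : ℝ)
    (h1 : rDC > rCC) (h2 : rCC > rDD) (h3 : rDD > rCD)
    (hγ0 : 0 < γ) (hγ1 : γ < 1) :
    (γ ≥ (rDC - rCC) / (rCC - rDD) →
      rCD + γ * rDD + γ ^ 2 * rCC ≤ rDD + γ * rCC + γ ^ 2 * rCC ∧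
      rDC + γ * rDD + γ ^ 2 * rCC ≤ rCC + γ * rCC + γ ^ 2 * rCC) ∧
    ((rDC + γ * rDD + γ ^ 2 * rCC ≤ rCC + γ * rCC + γ ^ 2 * rCC) ↔
      γ ≥ (rDC - rCC) / (rCC - rDD)) :=
  pavlov_one_shot_deviation_general rCC rCD rDC rDD γ h2 h3 hγ0
end
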